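/- Under the setup of the constant rebalanced portfolio with positive asset prices S_0^i, S_t^i > 0: V_t^π := (∏_i (S_t^i/S_0^i)^{π_i}) · exp((1/2)(∑_i π_i C_{ii} − π^T C π)) with C symmetric positive semidefinite and π in the simplex, we have log V_t^π ≥ ∑_i π_i log(S_t^i/S_0^i). -/

import Mathlib

private lemma diag_nonneg {d : ℕ} (C : Matrix (Fin d) (Fin d) ℝ)
    (hpsd : ∀ x : Fin d → ℝ, 0 ≤ ∑ i, ∑ j, x i * x j * C i j) (i : Fin d) :
    0 ≤ C i i := by
  have h := hpsd (fun k => if k = i then 1 else 0)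
  simpa [Finset.sum_ite_eq', mul_ite, ite_mul] using h

private lemma entry_le_sqrt {d : ℕ} (C : Matrix (Fin d) (Fin d) ℝ)
    (hsymm : ∀ i j, C i j = C j i)
    (hpsd : ∀ x : Fin d → ℝ, 0 ≤ ∑ i, ∑ j, x i * x j * C i j) (i j : Fin d) :
    C i j ≤ Real.sqrt (C i i * C j j) := by
  by_cases hij : i = j
  · subst hij
    have h := diag_nonneg C hpsd i
    rw [Real.sqrt_mul_self h]
  · have key : ∀ t : ℝ, 0 ≤ C i i * (t * t) + (2 * C i j) * t + C j j := by
      intro t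
      have h := hpsd (fun k => t * (if k = i then 1 else 0) + (if k = j then 1 else 0))
      have hexp : ∑ k, ∑ l,
          ((t * (if k = i then 1 else 0) + (if k = j then 1 else 0)) *
           (t * (if l = i then 1 else 0) + (if l = j then 1 else 0)) * C k l)
          = C i i * (t * t) + (2 * C i j) * t + C j j := by
        simp only [add_mul, mul_add, Finset.sum_add_distrib, mul_ite, ite_mul,
          mul_one, mul_zero, zero_mul, one_mul, Finset.sum_ite_eq', Finset.mem_univ,
          if_true]
        rw [hsymm j i]
        ring
      rw [hexp] at h
      exact h
    have hd := discrim_le_zero key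
    rw [discrim] at hd
    have hsq : C i j ^ 2 ≤ C i i * C j j := by nlinarith [hd]
    calc C i j ≤ |C i j| := le_abs_self _
      _ = Real.sqrt ((C i j) ^ 2) := (Real.sqrt_sq_eq_abs _).symm
      _ ≤ Real.sqrt (C i i * C j j) := Real.sqrt_le_sqrt hsq

private lemma excess_nonneg {d : ℕ} (C : Matrix (Fin d) (Fin d) ℝ)
    (hsymm : ∀ i j, C i j = C j i)
    (hpsd : ∀ x : Fin d → ℝ, 0 ≤ ∑ i, ∑ j, x i * x j * C i j)
    (π : Fin d → ℝ) (hπ : ∀ i, 0 ≤ π i) (hsum : ∑ i, π i = 1) :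
    ∑ i, ∑ j, π i * π j * C i j ≤ ∑ i, π i * C i i := by
  have h1 : ∑ i, ∑ j, π i * π j * C i j
      ≤ ∑ i, ∑ j, π i * π j * (Real.sqrt (C i i) * Real.sqrt (C j j)) := by
    apply Finset.sum_le_sum; intro i _
    apply Finset.sum_le_sum; intro j _
    have := entry_le_sqrt C hsymm hpsd i j
    rw [Real.sqrt_mul (diag_nonneg C hpsd i)] at this
    exact mul_le_mul_of_nonneg_left this (mul_nonneg (hπ i) (hπ j))
  have h2 : ∑ i, ∑ j, π i * π j * (Real.sqrt (C i i) * Real.sqrt (C j j))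
      = (∑ i, π i * Real.sqrt (C i i)) ^ 2 := by
    rw [sq, Finset.sum_mul_sum]
    apply Finset.sum_congr rfl; intro i _
    apply Finset.sum_congr rfl; intro j _
    ring
  have h3 : (∑ i, π i * Real.sqrt (C i i)) ^ 2 ≤ ∑ i, π i * C i i := by
    have hcs := Finset.sum_mul_sq_le_sq_mul_sq Finset.univ
      (fun i => Real.sqrt (π i)) (fun i => Real.sqrt (π i) * Real.sqrt (C i i))
    have heq1 : ∀ i, Real.sqrt (π i) * (Real.sqrt (π i) * Real.sqrt (C i i))
        = π i * Real.sqrt (C i i) := fun i => by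
      rw [← mul_assoc, Real.mul_self_sqrt (hπ i)]
    have heq2 : ∀ i, (Real.sqrt (π i) * Real.sqrt (C i i)) ^ 2 = π i * C i i := fun i => by
      rw [mul_pow, Real.sq_sqrt (hπ i), Real.sq_sqrt (diag_nonneg C hpsd i)]
    have heq3 : ∀ i, Real.sqrt (π i) ^ 2 = π i := fun i => Real.sq_sqrt (hπ i)
    simp only [heq1, heq2, heq3] at hcs
    rwa [hsum, one_mul] at hcs
  linarith

/-- With positive prices `S0 i, St i > 0`, `π` in the simplex and `C`
symmetric positive semidefinite, the constant rebalanced portfolio value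
`V = (∏ (St i / S0 i)^{π_i}) * exp((1/2)(∑ π_i C_ii − π^T C π))` satisfies
`log V ≥ ∑ π_i log(St i / S0 i)`. -/
theorem log_constant_rebalanced_ge_weighted_log
    {d : ℕ} (C : Matrix (Fin d) (Fin d) ℝ)
    (hsymm : ∀ i j, C i j = C j i)
    (hpsd : ∀ x : Fin d → ℝ, 0 ≤ ∑ i, ∑ j, x i * x j * C i j)
    (π : Fin d → ℝ) (hπ : ∀ i, 0 ≤ π i) (hsum : ∑ i, π i = 1)
    (S0 St : Fin d → ℝ) (hS0 : ∀ i, 0 < S0 i) (hSt : ∀ i, 0 < St i)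
    (V : ℝ)
    (hV : V = (∏ i, (St i / S0 i) ^ (π i)) *
      Real.exp ((1 / 2) * ((∑ i, π i * C i i) - ∑ i, ∑ j, π i * π j * C i j))) :
    Real.log V ≥ ∑ i, π i * Real.log (St i / S0 i) := by
  have hr : ∀ i, 0 < St i / S0 i := fun i => div_pos (hSt i) (hS0 i)
  have hprod : 0 < ∏ i, (St i / S0 i) ^ (π i) :=
    Finset.prod_pos fun i _ => Real.rpow_pos_of_pos (hr i) _
  have hlog : Real.log V = (∑ i, π i * Real.log (St i / S0 i)) +
      (1 / 2) * ((∑ i, π i * C i i) - ∑ i, ∑ j, π i * π j * C i j) := by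
    rw [hV, Real.log_mul (ne_of_gt hprod) (Real.exp_ne_zero _), Real.log_exp,
      Real.log_prod (fun i _ => ne_of_gt (Real.rpow_pos_of_pos (hr i) _))]
    congr 1
    exact Finset.sum_congr rfl fun i _ => by rw [Real.log_rpow (hr i)]
  rw [hlog]
  have := excess_nonneg C hsymm hpsd π hπ hsum
  linarith
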